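/- arXiv:1802.07560 — 3 statements merged into one kernel-verified Lean document; each statement's English description precedes it below -/
import Mathlib

section
/- Let H be a real inner product space, K ⊆ H a subset, j : H → ℝ a function, L : H → ℝ a linear map, and Y₁ > Y₂ real numbers. Suppose u₁, u₂ ∈ K satisfy, for i = 1, 2 and for all v ∈ K, the variational inequality ⟨uᵢ, v − uᵢ⟩ + Yᵢ·j(v) − Yᵢ·j(uᵢ) ≥ L(v − uᵢ). Then ‖u₁ − u₂‖² ≤ (Y₁ − Y₂)·(j(u₂) − j(u₁)). (This is the summed variational-inequality estimate used to prove the convergence rate of the Bingham velocities ω_Y as Y → Y_c.) -/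
open scoped RealInnerProductSpace

theorem inner_sub_add_inner_sub_eq_neg_norm_sub_sq {H : Type*} [NormedAddCommGroup H]
    [InnerProductSpace ℝ H] (x y : H) :
    ⟪x, y - x⟫ + ⟪y, x - y⟫ = -‖x - y‖ ^ 2 := by
  rw [← real_inner_self_eq_norm_sq, ← neg_sub y x, inner_neg_right, inner_neg_right,
    inner_neg_left, inner_sub_left]
  ring

theorem stmt_1_general {H : Type*} [NormedAddCommGroup H] [InnerProductSpace ℝ H]
    (K : Set H) (j : H → ℝ) (L : H →ₗ[ℝ] ℝ) (Y₁ Y₂ : ℝ)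
    (u₁ u₂ : H) (hu₁ : u₁ ∈ K) (hu₂ : u₂ ∈ K)
    (hVI₁ : ∀ v ∈ K, ⟪u₁, v - u₁⟫ + Y₁ * j v - Y₁ * j u₁ ≥ L (v - u₁))
    (hVI₂ : ∀ v ∈ K, ⟪u₂, v - u₂⟫ + Y₂ * j v - Y₂ * j u₂ ≥ L (v - u₂)) :
    ‖u₁ - u₂‖ ^ 2 ≤ (Y₁ - Y₂) * (j u₂ - j u₁) := by
  have h₁ := hVI₁ u₂ hu₂
  have h₂ := hVI₂ u₁ hu₁
  have hL : L (u₁ - u₂) = -L (u₂ - u₁) := by rw [← map_neg, neg_sub]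
  linear_combination h₁ + h₂ + inner_sub_add_inner_sub_eq_neg_norm_sub_sq u₁ u₂ - hL

/-- summed variational-inequality estimate. -/
theorem stmt_1 {H : Type*} [NormedAddCommGroup H] [InnerProductSpace ℝ H]
    (K : Set H) (j : H → ℝ) (L : H →ₗ[ℝ] ℝ) (Y₁ Y₂ : ℝ) (hY : Y₁ > Y₂)
    (u₁ u₂ : H) (hu₁ : u₁ ∈ K) (hu₂ : u₂ ∈ K)
    (hVI₁ : ∀ v ∈ K, ⟪u₁, v - u₁⟫ + Y₁ * j v - Y₁ * j u₁ ≥ L (v - u₁))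
    (hVI₂ : ∀ v ∈ K, ⟪u₂, v - u₂⟫ + Y₂ * j v - Y₂ * j u₂ ≥ L (v - u₂)) :
    ‖u₁ - u₂‖ ^ 2 ≤ (Y₁ - Y₂) * (j u₂ - j u₁) :=
  stmt_1_general K j L Y₁ Y₂ u₁ u₂ hu₁ hu₂ hVI₁ hVI₂
end

section
/- Let d ≥ 1, let A ⊆ ℝ^d be open, and let v : ℝ^d → ℝ be integrable with finite total variation on A. Then TV(v, A) = TV⁺(v, A), where TV(v, A) := sup { ∫_A v · div p : p ∈ C¹_c(A; ℝ^d), |p(x)| ≤ 1 for all x } and TV⁺(v, A) := sup { ∫_A v · (div p − div q) : p, q ∈ C¹_c(A; ℝ^d), p and q have all components nonnegative, and |p(x)|² + |q(x)|² ≤ 1 for all x }. That is, the total variation may equivalently be computed using pairs of componentwise-nonnegative dual test fields. -/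
/-!
A pair `(p, q)` of componentwise nonnegative fields has `⟪p, q⟫ ≥ 0`, so `‖p - q‖² ≤ ‖p‖² + ‖q‖²`
and `p - q` is admissible for `TV`; this gives `TV⁺ ≤ TV`.

Conversely, for an admissible `p` and `|t| < 1`, split `t p = P - Q` with
`P = χ φ(t p)`, `Q = χ φ(-t p)`, where `φ(s) = (s + √(s² + δ²)) / 2` is applied componentwise and
`χ` is a smooth cutoff equal to `1` on the support of `p`. Both fields are nonnegative, and the
identities `φ(s) - φ(-s) = s`, `φ(s)² + φ(-s)² = s² + δ²/2` give
`‖P‖² + ‖Q‖² ≤ t² + d δ²/2 ≤ 1` once `δ` is small. Hence `t · ∫ v div p ≤ TV⁺` and `t → 1` gives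
`TV ≤ TV⁺`.
-/

open MeasureTheory
open scoped ENNReal

noncomputable section

/-- The divergence `∑ i ∂ᵢ pᵢ` of a vector field `p : ℝ^d → ℝ^d`. -/
def vdiv {d : ℕ} (p : EuclideanSpace ℝ (Fin d) → EuclideanSpace ℝ (Fin d))
    (x : EuclideanSpace ℝ (Fin d)) : ℝ :=
  ∑ i, fderiv ℝ p x (EuclideanSpace.single i 1) i

/-- The total variation `TV(v, A)` of `v` on an open set `A`, defined by duality against
`C¹` compactly supported vector fields with values in the unit ball. -/
def TV {d : ℕ} (v : EuclideanSpace ℝ (Fin d) → ℝ) (A : Set (EuclideanSpace ℝ (Fin d))) : ℝ≥0∞ :=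
  ⨆ p : {p : EuclideanSpace ℝ (Fin d) → EuclideanSpace ℝ (Fin d) //
      ContDiff ℝ 1 p ∧ HasCompactSupport p ∧ tsupport p ⊆ A ∧ ∀ x, ‖p x‖ ≤ 1},
    ENNReal.ofReal (∫ x in A, v x * vdiv p.1 x)

/-- The total variation computed with pairs of componentwise-nonnegative dual fields. -/
def TVplus {d : ℕ} (v : EuclideanSpace ℝ (Fin d) → ℝ)
    (A : Set (EuclideanSpace ℝ (Fin d))) : ℝ≥0∞ :=
  ⨆ pq : {pq : (EuclideanSpace ℝ (Fin d) → EuclideanSpace ℝ (Fin d)) ×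
      (EuclideanSpace ℝ (Fin d) → EuclideanSpace ℝ (Fin d)) //
      ContDiff ℝ 1 pq.1 ∧ ContDiff ℝ 1 pq.2 ∧
      HasCompactSupport pq.1 ∧ HasCompactSupport pq.2 ∧
      tsupport pq.1 ⊆ A ∧ tsupport pq.2 ⊆ A ∧
      (∀ x i, 0 ≤ pq.1 x i) ∧ (∀ x i, 0 ≤ pq.2 x i) ∧
      ∀ x, ‖pq.1 x‖ ^ 2 + ‖pq.2 x‖ ^ 2 ≤ 1},
    ENNReal.ofReal (∫ x in A, v x * (vdiv pq.1.1 x - vdiv pq.1.2 x))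

open Set Filter Topology

section vdiv

variable {d : ℕ}

lemma vdiv_sub {p q : EuclideanSpace ℝ (Fin d) → EuclideanSpace ℝ (Fin d)}
    {x : EuclideanSpace ℝ (Fin d)} (hp : DifferentiableAt ℝ p x) (hq : DifferentiableAt ℝ q x) :
    vdiv (p - q) x = vdiv p x - vdiv q x := by
  simp [vdiv, fderiv_sub hp hq, Finset.sum_sub_distrib]

lemma vdiv_const_smul (t : ℝ) (p : EuclideanSpace ℝ (Fin d) → EuclideanSpace ℝ (Fin d))
    (x : EuclideanSpace ℝ (Fin d)) : vdiv (t • p) x = t * vdiv p x := by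
  simp [vdiv, fderiv_const_smul_field, Finset.mul_sum]

end vdiv

section smoothPosPart

def smoothPosPart (δ s : ℝ) : ℝ := (s + √(s ^ 2 + δ ^ 2)) / 2

variable (δ s : ℝ)

lemma smoothPosPart_nonneg : 0 ≤ smoothPosPart δ s := by
  have : |s| ≤ √(s ^ 2 + δ ^ 2) := by
    rw [← Real.sqrt_sq_eq_abs]
    exact Real.sqrt_le_sqrt (by nlinarith)
  unfold smoothPosPart
  linarith [neg_abs_le s]

lemma smoothPosPart_sub_neg : smoothPosPart δ s - smoothPosPart δ (-s) = s := by
  simp only [smoothPosPart, neg_sq]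
  ring

lemma smoothPosPart_sq_add_sq_neg :
    smoothPosPart δ s ^ 2 + smoothPosPart δ (-s) ^ 2 = s ^ 2 + δ ^ 2 / 2 := by
  have := Real.sq_sqrt (add_nonneg (sq_nonneg s) (sq_nonneg δ))
  simp only [smoothPosPart, neg_sq]
  linear_combination this / 2

lemma contDiff_smoothPosPart {δ : ℝ} (hδ : δ ≠ 0) {n : WithTop ℕ∞} :
    ContDiff ℝ n (smoothPosPart δ) :=
  (contDiff_id.add (((contDiff_id.pow 2).add contDiff_const).sqrt
    fun s => by positivity)).div_const 2

end smoothPosPart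

section smoothPosPartVec

variable {ι : Type*}

def smoothPosPartVec (δ : ℝ) (y : EuclideanSpace ℝ ι) : EuclideanSpace ℝ ι :=
  WithLp.toLp 2 fun i => smoothPosPart δ (y i)

variable (δ : ℝ) (y : EuclideanSpace ℝ ι)

lemma smoothPosPartVec_apply_nonneg (i : ι) : 0 ≤ smoothPosPartVec δ y i :=
  smoothPosPart_nonneg δ (y i)

lemma smoothPosPartVec_sub_neg : smoothPosPartVec δ y - smoothPosPartVec δ (-y) = y := by
  ext i
  exact smoothPosPart_sub_neg δ (y i)

lemma norm_sq_smoothPosPartVec_add [Fintype ι] :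
    ‖smoothPosPartVec δ y‖ ^ 2 + ‖smoothPosPartVec δ (-y)‖ ^ 2 =
      ‖y‖ ^ 2 + Fintype.card ι * (δ ^ 2 / 2) := by
  simp only [EuclideanSpace.real_norm_sq_eq, ← Finset.sum_add_distrib]
  simp [smoothPosPartVec, smoothPosPart_sq_add_sq_neg, Finset.sum_add_distrib]

lemma contDiff_smoothPosPartVec [Fintype ι] {δ : ℝ} (hδ : δ ≠ 0) {n : WithTop ℕ∞} :
    ContDiff ℝ n (smoothPosPartVec (ι := ι) δ) :=
  contDiff_piLp' 2 fun _ => (contDiff_smoothPosPart hδ).comp (contDiff_piLp_apply 2)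

end smoothPosPartVec

section cutoff

variable {E : Type*} [NormedAddCommGroup E] [NormedSpace ℝ E] [FiniteDimensional ℝ E]

open scoped Manifold in
lemma IsCompact.exists_contDiff_eqOn_one {K A : Set E} (hK : IsCompact K) (hA : IsOpen A)
    (hKA : K ⊆ A) {n : ℕ∞} :
    ∃ χ : E → ℝ, ContDiff ℝ n χ ∧ HasCompactSupport χ ∧ tsupport χ ⊆ A ∧ EqOn χ 1 K ∧
      ∀ x, χ x ∈ Icc 0 1 := by
  obtain ⟨L, hL, hKL, hLA⟩ := exists_compact_between hK hA hKA
  obtain ⟨χ, hχ, hχ01, hχL, hχK⟩ := exists_contMDiff_support_eq_eq_one_iff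
    (𝓘(ℝ, E)) (n := n) isOpen_interior hK.isClosed hKL
  have hχL : tsupport χ ⊆ L := by
    rw [tsupport, hχL]
    exact closure_minimal interior_subset hL.isClosed
  exact ⟨χ, contMDiff_iff_contDiff.1 hχ, hL.of_isClosed_subset (isClosed_tsupport χ) hχL,
    hχL.trans hLA, fun x hx => (hχK x).1 hx, fun x => hχ01 (mem_range_self x)⟩

end cutoff

section splitting

variable {E : Type*} [NormedAddCommGroup E] [NormedSpace ℝ E] [FiniteDimensional ℝ E]
  {ι : Type*} [Fintype ι]

lemma norm_sub_sq_le_of_nonneg {y z : EuclideanSpace ℝ ι} (hy : ∀ i, 0 ≤ y i)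
    (hz : ∀ i, 0 ≤ z i) : ‖y - z‖ ^ 2 ≤ ‖y‖ ^ 2 + ‖z‖ ^ 2 := by
  have hinner : 0 ≤ inner ℝ y z := by
    rw [PiLp.inner_apply]
    exact Finset.sum_nonneg fun i _ => by simpa using mul_nonneg (hz i) (hy i)
  rw [norm_sub_sq_real]
  linarith

lemma exists_ne_zero_mul_sq_le {c ε : ℝ} (hc : 0 ≤ c) (hε : 0 < ε) :
    ∃ δ : ℝ, δ ≠ 0 ∧ c * δ ^ 2 ≤ ε := by
  refine ⟨√(ε / (c + 1)), (Real.sqrt_pos.2 (by positivity)).ne', ?_⟩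
  rw [Real.sq_sqrt (by positivity), mul_div_assoc', div_le_iff₀ (by positivity)]
  nlinarith

lemma exists_nonneg_sub_eq_smul {A : Set E} (hA : IsOpen A) {p : E → EuclideanSpace ℝ ι}
    (hp : ContDiff ℝ 1 p) (hps : HasCompactSupport p) (hpA : tsupport p ⊆ A)
    (hpn : ∀ x, ‖p x‖ ≤ 1) {t : ℝ} (ht : |t| < 1) :
    ∃ P Q : E → EuclideanSpace ℝ ι, ContDiff ℝ 1 P ∧ ContDiff ℝ 1 Q ∧
      HasCompactSupport P ∧ HasCompactSupport Q ∧ tsupport P ⊆ A ∧ tsupport Q ⊆ A ∧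
      (∀ x i, 0 ≤ P x i) ∧ (∀ x i, 0 ≤ Q x i) ∧ (∀ x, ‖P x‖ ^ 2 + ‖Q x‖ ^ 2 ≤ 1) ∧
      P - Q = t • p := by
  obtain ⟨χ, hχ, hχs, hχA, hχ1, hχ01⟩ := hps.exists_contDiff_eqOn_one hA hpA (n := 1)
  have ht2 : t ^ 2 < 1 := by rwa [sq_lt_one_iff_abs_lt_one]
  obtain ⟨δ, hδ, hcardδ⟩ := exists_ne_zero_mul_sq_le (c := Fintype.card ι / 2) (by positivity)
    (sub_pos.2 ht2)
  have cutoff_smul : ∀ g : E → EuclideanSpace ℝ ι, ContDiff ℝ 1 g →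
      ContDiff ℝ 1 (fun x => χ x • g x) ∧ HasCompactSupport (fun x => χ x • g x) ∧
        tsupport (fun x => χ x • g x) ⊆ A := fun g hg =>
    ⟨hχ.smul hg, hχs.smul_right, (tsupport_smul_subset_left _ _).trans hχA⟩
  have htp : ContDiff ℝ 1 fun x => t • p x := hp.const_smul t
  obtain ⟨hPc, hPs, hPA⟩ := cutoff_smul _ ((contDiff_smoothPosPartVec hδ).comp htp)
  obtain ⟨hQc, hQs, hQA⟩ := cutoff_smul _ ((contDiff_smoothPosPartVec hδ).comp htp.neg)
  refine ⟨_, _, hPc, hQc, hPs, hQs, hPA, hQA,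
    fun x i => mul_nonneg (hχ01 x).1 (smoothPosPartVec_apply_nonneg _ _ _),
    fun x i => mul_nonneg (hχ01 x).1 (smoothPosPartVec_apply_nonneg _ _ _), fun x => ?_, ?_⟩
  · have hχsq : χ x ^ 2 ≤ 1 := pow_le_one₀ (hχ01 x).1 (hχ01 x).2
    have hpx : ‖p x‖ ^ 2 ≤ 1 := pow_le_one₀ (norm_nonneg _) (hpn x)
    calc ‖χ x • smoothPosPartVec δ (t • p x)‖ ^ 2 + ‖χ x • smoothPosPartVec δ (-(t • p x))‖ ^ 2
        = χ x ^ 2 * (t ^ 2 * ‖p x‖ ^ 2 + Fintype.card ι * (δ ^ 2 / 2)) := by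
          rw [norm_smul, norm_smul, mul_pow, mul_pow, ← mul_add, norm_sq_smoothPosPartVec_add,
            norm_smul, mul_pow]
          simp only [Real.norm_eq_abs, sq_abs]
      _ ≤ 1 := mul_le_one₀ hχsq (by positivity) (by nlinarith)
  · ext1 x
    by_cases hx : x ∈ tsupport p
    · simp [smoothPosPartVec_sub_neg, hχ1 hx]
    · simp [image_eq_zero_of_notMem_tsupport hx]

end splitting

section TV

variable {d : ℕ} {v : EuclideanSpace ℝ (Fin d) → ℝ} {A : Set (EuclideanSpace ℝ (Fin d))}

lemma TVplus_le_TV : TVplus v A ≤ TV v A := by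
  refine iSup_le fun ⟨(p, q), hp, hq, hps, hqs, hpA, hqA, hp0, hq0, hpq⟩ => ?_
  have hdiv : ∀ x, vdiv p x - vdiv q x = vdiv (p - q) x := fun x =>
    (vdiv_sub (hp.differentiable one_ne_zero x) (hq.differentiable one_ne_zero x)).symm
  have hnorm : ∀ x, ‖(p - q) x‖ ≤ 1 := fun x => by
    have := (norm_sub_sq_le_of_nonneg (hp0 x) (hq0 x)).trans (hpq x)
    exact (sq_le_one_iff₀ (norm_nonneg _)).1 this
  have hsupp : tsupport (p - q) ⊆ A :=
    (tsupport_sub p q).trans (union_subset hpA hqA)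
  simp only [hdiv]
  exact le_iSup (fun r : {r // _} => ENNReal.ofReal (∫ x in A, v x * vdiv r.1 x))
    ⟨p - q, hp.sub hq, hps.sub hqs, hsupp, hnorm⟩

lemma ofReal_mul_integral_le_TVplus (hA : IsOpen A)
    {p : EuclideanSpace ℝ (Fin d) → EuclideanSpace ℝ (Fin d)} (hp : ContDiff ℝ 1 p)
    (hps : HasCompactSupport p) (hpA : tsupport p ⊆ A) (hpn : ∀ x, ‖p x‖ ≤ 1) {t : ℝ}
    (ht : |t| < 1) : ENNReal.ofReal (t * ∫ x in A, v x * vdiv p x) ≤ TVplus v A := by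
  obtain ⟨P, Q, hP, hQ, hPs, hQs, hPA, hQA, hP0, hQ0, hPQ, hsub⟩ :=
    exists_nonneg_sub_eq_smul hA hp hps hpA hpn ht
  have hdiv : ∀ x, v x * (vdiv P x - vdiv Q x) = t * (v x * vdiv p x) := fun x => by
    rw [← vdiv_sub (hP.differentiable one_ne_zero x) (hQ.differentiable one_ne_zero x), hsub,
      vdiv_const_smul]
    ring
  rw [← integral_const_mul, ← integral_congr_ae (ae_of_all _ hdiv)]
  exact le_iSup (fun pq : {pq : _ × _ // _} =>
      ENNReal.ofReal (∫ x in A, v x * (vdiv pq.1.1 x - vdiv pq.1.2 x)))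
    ⟨(P, Q), hP, hQ, hPs, hQs, hPA, hQA, hP0, hQ0, hPQ⟩

lemma TV_le_TVplus (hA : IsOpen A) : TV v A ≤ TVplus v A := by
  refine iSup_le fun ⟨p, hp, hps, hpA, hpn⟩ => ?_
  set I := ∫ x in A, v x * vdiv p x
  have hlim : Tendsto (fun t : ℝ => ENNReal.ofReal (t * I)) (𝓝[<] 1) (𝓝 (ENNReal.ofReal I)) := by
    have hcont : Continuous fun t : ℝ => ENNReal.ofReal (t * I) :=
      ENNReal.continuous_ofReal.comp (continuous_mul_const I)
    simpa using (hcont.tendsto 1).mono_left nhdsWithin_le_nhds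
  refine le_of_tendsto hlim ?_
  filter_upwards [Ioo_mem_nhdsLT (show (-1 : ℝ) < 1 by norm_num)] with t ht
  exact ofReal_mul_integral_le_TVplus hA hp hps hpA hpn (abs_lt.2 ht)

end TV

theorem stmt_5_general {d : ℕ} (A : Set (EuclideanSpace ℝ (Fin d))) (hA : IsOpen A)
    (v : EuclideanSpace ℝ (Fin d) → ℝ) :
    TV v A = TVplus v A :=
  le_antisymm (TV_le_TVplus hA) TVplus_le_TV

/-- the total variation may equivalently be computed using pairs of
componentwise-nonnegative dual test fields. -/
theorem stmt_5 {d : ℕ} (hd : 1 ≤ d) (A : Set (EuclideanSpace ℝ (Fin d))) (hA : IsOpen A)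
    (v : EuclideanSpace ℝ (Fin d) → ℝ) (hv : Integrable v) (hTV : TV v A < ⊤) :
    TV v A = TVplus v A :=
  stmt_5_general A hA v

end
end

section
/- Let p ≥ 1 be an integer, let a, b, c ∈ ℝᵖ with every component of a nonnegative, and let β ∈ ℝ. Suppose the polyhedron S := { x ∈ ℝᵖ : xᵢ ≥ 0 for all i, b·x = β, c·x = 0 } is nonempty. Then the linear functional x ↦ a·x attains its infimum over S at some point x* ∈ S having at most two nonzero coordinates. (This is the linear programming argument reducing a finitely-valued minimizer to one with at most two nonzero level-set coefficients.) -/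
open Finset

namespace Stmt13

variable {p : ℕ}

/-- feasibility -/
def Feas (b c : Fin p → ℝ) (β : ℝ) (x : Fin p → ℝ) : Prop :=
  (∀ i, 0 ≤ x i) ∧ (∑ i, b i * x i) = β ∧ (∑ i, c i * x i) = 0

noncomputable def suppF (x : Fin p → ℝ) : Finset (Fin p) := Finset.univ.filter (fun i => x i ≠ 0)

lemma mem_suppF {x : Fin p → ℝ} {i : Fin p} : i ∈ suppF x ↔ x i ≠ 0 := by
  simp [suppF]

def vbc (b c : Fin p → ℝ) (i : Fin p) : ℝ × ℝ := (b i, c i)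

/-- key moving step: given a direction `e` supported in `supp x`, orthogonal to `b` and `c`,
with nonpositive objective and a negative coordinate, we can move to reduce the support. -/
lemma move (a b c : Fin p → ℝ) (β : ℝ)
    (x : Fin p → ℝ) (hx : Feas b c β x) (e : Fin p → ℝ)
    (hsupp : ∀ i, x i = 0 → e i = 0)
    (hbe : (∑ i, b i * e i) = 0) (hce : (∑ i, c i * e i) = 0)
    (hae : (∑ i, a i * e i) ≤ 0) (hneg : ∃ k, e k < 0) :
    ∃ x', Feas b c β x' ∧ (∑ i, a i * x' i) ≤ (∑ i, a i * x i) ∧ suppF x' ⊂ suppF x := by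
  obtain ⟨hx0, hxb, hxc⟩ := hx
  set F : Finset (Fin p) := Finset.univ.filter (fun k => e k < 0) with hF
  have hFne : F.Nonempty := by
    obtain ⟨k, hk⟩ := hneg
    exact ⟨k, by simp [hF, hk]⟩
  obtain ⟨k₀, hk₀F, hk₀min⟩ := Finset.exists_min_image F (fun k => x k / (-e k)) hFne
  have hek₀ : e k₀ < 0 := by simpa [hF] using hk₀F
  set t : ℝ := x k₀ / (-e k₀) with ht
  have ht0 : 0 ≤ t := div_nonneg (hx0 k₀) (by linarith)
  set x' : Fin p → ℝ := fun i => x i + t * e i with hx'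
  have hx'0 : ∀ i, 0 ≤ x' i := by
    intro i
    by_cases hei : 0 ≤ e i
    · have := hx0 i
      have : 0 ≤ t * e i := mul_nonneg ht0 hei
      simp only [hx']; linarith [hx0 i]
    · push_neg at hei
      have hiF : i ∈ F := by simp [hF, hei]
      have hle := hk₀min i hiF
      -- t ≤ x i / (-e i), so t * (-e i) ≤ x i
      have hpos : 0 < -e i := by linarith
      have : t * (-e i) ≤ x i := by
        rw [← le_div_iff₀ hpos]; exact hle
      simp only [hx']; nlinarith
  have hsum : ∀ f : Fin p → ℝ, (∑ i, f i * x' i) = (∑ i, f i * x i) + t * (∑ i, f i * e i) := by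
    intro f
    simp only [hx', mul_add, Finset.sum_add_distrib, Finset.mul_sum]
    congr 1
    exact Finset.sum_congr rfl fun i _ => by ring
  refine ⟨x', ⟨hx'0, ?_, ?_⟩, ?_, ?_⟩
  · rw [hsum b, hbe]; simp [hxb]
  · rw [hsum c, hce]; simp [hxc]
  · rw [hsum a]
    nlinarith [mul_nonpos_of_nonneg_of_nonpos ht0 hae]
  · have hsub : suppF x' ⊆ suppF x := by
      intro i hi
      rw [mem_suppF] at hi ⊢
      intro h0
      apply hi
      simp [hx', h0, hsupp i h0]
    rw [Finset.ssubset_iff_of_subset hsub]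
    refine ⟨k₀, ?_, ?_⟩
    · rw [mem_suppF]
      intro h0
      exact absurd (hsupp k₀ h0) (by linarith)
    · rw [mem_suppF]
      push_neg
      have hne : e k₀ ≠ 0 := ne_of_lt hek₀
      have h1 : x k₀ / -e k₀ * e k₀ = -x k₀ := by
        rw [div_mul_eq_mul_div, mul_div_assoc, div_neg, div_self hne]
        ring
      simp only [hx', ht]
      linarith

lemma step (a b c : Fin p → ℝ) (β : ℝ) (ha : ∀ i, 0 ≤ a i)
    (x : Fin p → ℝ) (hx : Feas b c β x)
    (hdep : ¬ LinearIndependent ℝ (fun i : suppF x => vbc b c i.1)) :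
    ∃ x', Feas b c β x' ∧ (∑ i, a i * x' i) ≤ (∑ i, a i * x i) ∧ suppF x' ⊂ suppF x := by
  classical
  rw [Fintype.not_linearIndependent_iff] at hdep
  obtain ⟨g, hg0, i0, hgi0⟩ := hdep
  set D : Fin p → ℝ := fun i => if h : i ∈ suppF x then g ⟨i, h⟩ else 0 with hD
  have hDsupp : ∀ i, x i = 0 → D i = 0 := by
    intro i hxi
    have hns : i ∉ suppF x := by simp [mem_suppF, hxi]
    simp [hD, hns]
  have hDsum : ∑ i, D i • vbc b c i = 0 := by
    rw [← Finset.sum_subset (Finset.subset_univ (suppF x))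
      (by intro i _ hi; simp [hD, hi])]
    rw [← Finset.sum_attach (suppF x) (fun i => D i • vbc b c i)]
    rw [← hg0]
    apply Finset.sum_congr rfl
    intro i _
    simp [hD, i.2]
  have hDb : ∑ i, b i * D i = 0 := by
    have h1 := congrArg Prod.fst hDsum
    rw [Prod.fst_sum] at h1
    simpa [vbc, mul_comm] using h1
  have hDc : ∑ i, c i * D i = 0 := by
    have h1 := congrArg Prod.snd hDsum
    rw [Prod.snd_sum] at h1
    simpa [vbc, mul_comm] using h1
  have hDne : D i0.1 ≠ 0 := by simpa [hD, i0.2] using hgi0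
  by_cases hcase : (∑ i, a i * D i) ≤ 0 ∧ ∃ k, D k < 0
  · exact move a b c β x hx D hDsupp
      (by rw [Finset.sum_congr rfl (fun i _ => (mul_comm (b i) (D i)))] at hDb ⊢; exact hDb)
      hDc hcase.1 hcase.2
  · push_neg at hcase
    have key : (∑ i, a i * D i) ≤ 0 → ∀ k, 0 ≤ D k := hcase
    refine move a b c β x hx (fun i => -D i) (fun i hxi => by simp [hDsupp i hxi]) ?_ ?_ ?_ ?_
    · simp only [mul_neg, Finset.sum_neg_distrib]
      simpa using hDb
    · simp only [mul_neg, Finset.sum_neg_distrib]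
      simpa using hDc
    · simp only [mul_neg, Finset.sum_neg_distrib, neg_nonpos]
      by_cases hle : (∑ i, a i * D i) ≤ 0
      · exact Finset.sum_nonneg fun i _ => mul_nonneg (ha i) (key hle i)
      · linarith [not_le.mp hle]
    · by_cases hle : (∑ i, a i * D i) ≤ 0
      · exact ⟨i0.1, by have := key hle i0.1; simp only [neg_lt_zero]; cases (lt_or_eq_of_le this) with
          | inl h => exact h
          | inr h => exact absurd h.symm hDne⟩
      · by_contra hall
        push_neg at hall
        have : ∀ k, D k ≤ 0 := by
          intro k
          have := hall k
          linarith
        have : (∑ i, a i * D i) ≤ 0 :=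
          Finset.sum_nonpos fun i _ => mul_nonpos_of_nonneg_of_nonpos (ha i) (this i)
        exact hle this

lemma reduce (a b c : Fin p → ℝ) (β : ℝ) (ha : ∀ i, 0 ≤ a i) :
    ∀ n (x : Fin p → ℝ), Feas b c β x → (suppF x).card = n →
      ∃ x', Feas b c β x' ∧ (∑ i, a i * x' i) ≤ (∑ i, a i * x i) ∧
        LinearIndependent ℝ (fun i : suppF x' => vbc b c i.1) := by
  intro n
  induction n using Nat.strong_induction_on with
  | _ n ih =>
    intro x hx hcard
    by_cases hdep : LinearIndependent ℝ (fun i : suppF x => vbc b c i.1)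
    · exact ⟨x, hx, le_refl _, hdep⟩
    · obtain ⟨x'', hfeas, hle, hss⟩ := step a b c β ha x hx hdep
      obtain ⟨x', h1, h2, h3⟩ := ih (suppF x'').card
        (by rw [← hcard]; exact Finset.card_lt_card hss) x'' hfeas rfl
      exact ⟨x', h1, le_trans h2 hle, h3⟩

lemma sum_vbc (b c : Fin p → ℝ) (x : Fin p → ℝ) :
    ∑ i ∈ suppF x, (x i) • vbc b c i = (∑ i, b i * x i, ∑ i, c i * x i) := by
  rw [Finset.sum_subset (Finset.subset_univ (suppF x))
    (by intro i _ hi; rw [mem_suppF, not_not] at hi; simp [hi])]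
  rw [Prod.ext_iff]
  constructor
  · rw [Prod.fst_sum]
    exact Finset.sum_congr rfl fun i _ => by simp [vbc, mul_comm]
  · rw [Prod.snd_sum]
    exact Finset.sum_congr rfl fun i _ => by simp [vbc, mul_comm]

lemma uniq (b c : Fin p → ℝ) (β : ℝ) {x y : Fin p → ℝ}
    (hx : Feas b c β x) (hy : Feas b c β y)
    (hind : LinearIndependent ℝ (fun i : suppF x => vbc b c i.1))
    (hsupp : suppF x = suppF y) : x = y := by
  have hzero : ∀ i : suppF x, x i.1 - y i.1 = 0 := by
    apply Fintype.linearIndependent_iff.mp hind (fun i => x i.1 - y i.1)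
    have : ∑ i : suppF x, (x i.1 - y i.1) • vbc b c i.1
        = ∑ i ∈ suppF x, (x i - y i) • vbc b c i :=
      Finset.sum_coe_sort (suppF x) (fun i => (x i - y i) • vbc b c i)
    rw [this]
    have hsplit : ∑ i ∈ suppF x, (x i - y i) • vbc b c i
        = (∑ i ∈ suppF x, (x i) • vbc b c i) - (∑ i ∈ suppF x, (y i) • vbc b c i) := by
      rw [← Finset.sum_sub_distrib]
      exact Finset.sum_congr rfl fun i _ => by rw [sub_smul]
    rw [hsplit, sum_vbc, hsupp, sum_vbc, hx.2.1, hx.2.2, hy.2.1, hy.2.2, sub_self]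
  funext i
  by_cases hi : i ∈ suppF x
  · have := hzero ⟨i, hi⟩
    linarith [this]
  · have hx0 : x i = 0 := by rwa [mem_suppF, not_not] at hi
    have hy0 : y i = 0 := by
      rw [hsupp] at hi
      rwa [mem_suppF, not_not] at hi
    rw [hx0, hy0]

end Stmt13

/-- a linear functional with nonnegative coefficients attains its infimum over
the (nonempty) polyhedron `{x ≥ 0, b·x = β, c·x = 0}` at a point with at most two nonzero
coordinates. -/
theorem stmt_13 (p : ℕ) (hp : 1 ≤ p) (a b c : Fin p → ℝ) (ha : ∀ i, 0 ≤ a i) (β : ℝ)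
    (hne : ∃ x : Fin p → ℝ, (∀ i, 0 ≤ x i) ∧ (∑ i, b i * x i) = β ∧ (∑ i, c i * x i) = 0) :
    ∃ x : Fin p → ℝ,
      ((∀ i, 0 ≤ x i) ∧ (∑ i, b i * x i) = β ∧ (∑ i, c i * x i) = 0) ∧
      (∀ y : Fin p → ℝ, (∀ i, 0 ≤ y i) → (∑ i, b i * y i) = β → (∑ i, c i * y i) = 0 →
        (∑ i, a i * x i) ≤ ∑ i, a i * y i) ∧
      Set.ncard {i | x i ≠ 0} ≤ 2 := by
  classical
  obtain ⟨x₀, hx₀⟩ := hne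
  set G : Set (Fin p → ℝ) :=
    {x | Stmt13.Feas b c β x ∧
      LinearIndependent ℝ (fun i : Stmt13.suppF x => Stmt13.vbc b c i.1)} with hG
  have hGfin : G.Finite := by
    have hinj : Set.InjOn Stmt13.suppF G := by
      intro x hx y hy hxy
      exact Stmt13.uniq b c β hx.1 hy.1 hx.2 hxy
    exact Set.Finite.of_finite_image (Set.toFinite _) hinj
  have hGne : G.Nonempty := by
    obtain ⟨x', h1, _, h3⟩ := Stmt13.reduce a b c β ha (Stmt13.suppF x₀).card x₀ hx₀ rfl
    exact ⟨x', h1, h3⟩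
  obtain ⟨xs, hxsG, hmin⟩ := Set.exists_min_image G (fun x => ∑ i, a i * x i) hGfin hGne
  refine ⟨xs, hxsG.1, ?_, ?_⟩
  · intro y hy1 hy2 hy3
    obtain ⟨y', hy'1, hy'2, hy'3⟩ :=
      Stmt13.reduce a b c β ha (Stmt13.suppF y).card y ⟨hy1, hy2, hy3⟩ rfl
    exact le_trans (hmin y' ⟨hy'1, hy'3⟩) hy'2
  · have hset : {i | xs i ≠ 0} = ↑(Stmt13.suppF xs) := by
      ext i; simp [Stmt13.mem_suppF]
    rw [hset, Set.ncard_coe_finset]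
    have h2 := hxsG.2.fintype_card_le_finrank
    rw [Fintype.card_coe] at h2
    have hrk : Module.finrank ℝ (ℝ × ℝ) = 2 := by
      rw [Module.finrank_prod, Module.finrank_self]
    rwa [hrk] at h2
end
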